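/- For any distinct pair of nodes u and v in Ñ⊙(P,α), the sets δ⊙(v,α) and δ⊙(u,α) are disjoint; and for any distinct pair of nodes u and v in Ñ∗(P,α), the sets δ∗(v,α) and δ∗(u,α) are disjoint. -/

import Mathlib

/-- Non-empty regular expressions over alphabet `α`, identified with their parse trees. -/
inductive RE (α : Type) : Type where
  | eps : RE α
  | ch : α → RE α
  | cat : RE α → RE α → RE α
  | alt : RE α → RE α → RE α
  | star : RE α → RE α

/-- Child directions in the parse tree (a `star`-node only has an `L` child). -/
inductive Dir : Type where
  | L : Dir
  | R : Dir
  deriving DecidableEq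

/-- A node of the parse tree is identified with the path from the root to it. -/
abbrev TreePath : Type := List Dir

namespace RE

variable {α : Type}

/-- The subexpression of `R` rooted at the node reached by following path `v`
(`none` if no such node exists). -/
def sub : RE α → TreePath → Option (RE α)
  | r, [] => some r
  | .cat r _, .L :: p => sub r p
  | .cat _ s, .R :: p => sub s p
  | .alt r _, .L :: p => sub r p
  | .alt _ s, .R :: p => sub s p
  | .star r, .L :: p => sub r p
  | _, _ => none

/-- `v` is a node of the parse tree of `R`. -/
def IsNode (R : RE α) (v : TreePath) : Prop := ∃ r, R.sub v = some r

/-- The label of a position (character leaf); `none` if `p` is not a position. -/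
def labelOf (R : RE α) (p : TreePath) : Option α :=
  match R.sub p with
  | some (.ch a) => some a
  | _ => none

/-- `p` is a position of `R`, i.e. a leaf labeled by a character. -/
def IsPos (R : RE α) (p : TreePath) : Prop := ∃ a, R.labelOf p = some a

/-- `v` is a `⊙`-node (concatenation node). -/
def IsCatNode (R : RE α) (v : TreePath) : Prop := ∃ r s, R.sub v = some (.cat r s)

/-- `v` is a `∗`-node (Kleene-star node). -/
def IsStarNode (R : RE α) (v : TreePath) : Prop := ∃ r, R.sub v = some (.star r)

/-- `PosSeq r w` holds when `w` is a sequence of (paths to) positions of `r`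
whose labels spell some string of `L(r)`. -/
inductive PosSeq : RE α → List TreePath → Prop where
  | eps : PosSeq .eps []
  | ch (a : α) : PosSeq (.ch a) [[]]
  | cat {r s : RE α} {u v : List TreePath} : PosSeq r u → PosSeq s v →
      PosSeq (.cat r s) (u.map (Dir.L :: ·) ++ v.map (Dir.R :: ·))
  | altL {r s : RE α} {u : List TreePath} : PosSeq r u → PosSeq (.alt r s) (u.map (Dir.L :: ·))
  | altR {r s : RE α} {v : List TreePath} : PosSeq s v → PosSeq (.alt r s) (v.map (Dir.R :: ·))
  | starNil {r : RE α} : PosSeq (.star r) []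
  | starCons {r : RE α} {u w : List TreePath} : PosSeq r u → PosSeq (.star r) w →
      PosSeq (.star r) (u.map (Dir.L :: ·) ++ w)

/-- `first(v)`: the positions (as paths in `R`) that occur first in a position
sequence of the subexpression rooted at `v`. -/
def firstSet (R : RE α) (v : TreePath) : Set TreePath :=
  {p | ∃ r, R.sub v = some r ∧ ∃ p' w, PosSeq r (p' :: w) ∧ p = v ++ p'}

/-- `last(v)`: the positions (as paths in `R`) that occur last in a position
sequence of the subexpression rooted at `v`. -/
def lastSet (R : RE α) (v : TreePath) : Set TreePath :=
  {p | ∃ r, R.sub v = some r ∧ ∃ w p', PosSeq r (w ++ [p']) ∧ p = v ++ p'}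

/-- `follow(R,p)`: the positions that can follow `p` in a position sequence of `R`. -/
def followSet (R : RE α) (p : TreePath) : Set TreePath :=
  {q | ∃ w₁ w₂, PosSeq R (w₁ ++ p :: q :: w₂)}

/-- `firstextent(p) = {v : p ∈ first(v)}`. -/
def firstExtent (R : RE α) (p : TreePath) : Set TreePath := {v | p ∈ R.firstSet v}

/-- `lastextent(p) = {v : p ∈ last(v)}`. -/
def lastExtent (R : RE α) (p : TreePath) : Set TreePath := {v | p ∈ R.lastSet v}

/-- `firstextent(P)` for a set of positions `P`. -/
def firstExtentSet (R : RE α) (P : Set TreePath) : Set TreePath := ⋃ p ∈ P, R.firstExtent p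

/-- `lastextent(P)` for a set of positions `P`. -/
def lastExtentSet (R : RE α) (P : Set TreePath) : Set TreePath := ⋃ p ∈ P, R.lastExtent p

end RE

/-- Lowest common ancestor of two nodes = longest common prefix of the paths. -/
def lcaP : TreePath → TreePath → TreePath
  | a :: p, b :: q => if a = b then a :: lcaP p q else []
  | _, _ => []

namespace RE

variable {α : Type}

/-- `u = parent*(v)`: `u` is the lowest ancestor of `v` (possibly `v` itself)
that is a `∗`-node. -/
def IsLowestStarAnc (R : RE α) (v u : TreePath) : Prop :=
  u <+: v ∧ R.IsStarNode u ∧ ∀ w, w <+: v → R.IsStarNode w → w <+: u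

/-- `δ(p,α)`: the `α`-transitions of the position automaton out of position `p`. -/
def delta (R : RE α) (p : TreePath) (a : α) : Set TreePath :=
  {q | R.labelOf q = some a ∧ q ∈ R.followSet p}

/-- `δ(P,α) = ∪_{p ∈ P} δ(p,α)`. -/
def deltaSet (R : RE α) (P : Set TreePath) (a : α) : Set TreePath := ⋃ p ∈ P, R.delta p a

/-- Internal `⊙`-transition: `δ⊙(v,α) = {q ∈ Pos_α : right(v) ∈ firstextent(q)}`. -/
def deltaOdot (R : RE α) (v : TreePath) (a : α) : Set TreePath :=
  {q | R.labelOf q = some a ∧ q ∈ R.firstSet (v ++ [Dir.R])}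

/-- Internal `∗`-transition: `δ∗(v,α) = {q ∈ Pos_α : parent*(v) ∈ firstextent(q)}`. -/
def deltaStar (R : RE α) (v : TreePath) (a : α) : Set TreePath :=
  {q | R.labelOf q = some a ∧ ∃ u, R.IsLowestStarAnc v u ∧ q ∈ R.firstSet u}

/-- `N⊙(P,α)`: the `⊙`-transition nodes. -/
def NOdot (R : RE α) (P : Set TreePath) (a : α) : Set TreePath :=
  {v | R.IsCatNode v ∧ (v ++ [Dir.L]) ∈ R.lastExtentSet P ∧
    (∃ q, R.labelOf q = some a ∧ q ∈ R.firstSet (v ++ [Dir.R]))}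

/-- `N∗(P,α)`: the `∗`-transition nodes. -/
def NStar (R : RE α) (P : Set TreePath) (a : α) : Set TreePath :=
  {u | R.IsStarNode u ∧
    (∃ p ∈ P, ∃ q, R.labelOf q = some a ∧ R.IsLowestStarAnc (lcaP p q) u) ∧
    (∃ p ∈ P, p ∈ R.lastSet u) ∧ (∃ q, R.labelOf q = some a ∧ q ∈ R.firstSet u)}

/-- `u` `∗`-dominates `v`: `u` is a proper ancestor of `v` and `first(v) ⊆ first(u)`. -/
def StarDom (R : RE α) (u v : TreePath) : Prop :=
  u <+: v ∧ u ≠ v ∧ R.firstSet v ⊆ R.firstSet u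

/-- `u` `⊙`-dominates `v`: `u` is a proper ancestor of `v` and
`first(right(v)) ⊆ first(right(u))`. -/
def OdotDom (R : RE α) (u v : TreePath) : Prop :=
  u <+: v ∧ u ≠ v ∧ R.firstSet (v ++ [Dir.R]) ⊆ R.firstSet (u ++ [Dir.R])

/-- `Ñ⊙(P,α)`: the relevant `⊙`-transition nodes. -/
def RelNOdot (R : RE α) (P : Set TreePath) (a : α) : Set TreePath :=
  {v ∈ R.NOdot P a | ∀ u ∈ R.NOdot P a, ¬ R.OdotDom u v}

/-- `Ñ∗(P,α)`: the relevant `∗`-transition nodes. -/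
def RelNStar (R : RE α) (P : Set TreePath) (a : α) : Set TreePath :=
  {v ∈ R.NStar P a | ∀ u ∈ R.NStar P a, ¬ R.StarDom u v}

/-- `v` is a node of the transition tree `T` of `P`: an ancestor of some position of `P`. -/
def InT (R : RE α) (P : Set TreePath) (v : TreePath) : Prop := ∃ p ∈ P, v <+: p

/-- `v` is a branching node of the transition tree of `P`: both children are in `T`. -/
def Branching (R : RE α) (P : Set TreePath) (v : TreePath) : Prop :=
  R.InT P (v ++ [Dir.L]) ∧ R.InT P (v ++ [Dir.R])

/-- `v` is a leaf of the transition tree of `P`. -/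
def LeafT (R : RE α) (P : Set TreePath) (v : TreePath) : Prop :=
  R.InT P v ∧ ∀ d : Dir, ¬ R.InT P (v ++ [d])

/-- `v` is a `⊙`-live node: a `⊙`-node with `left(v) ∈ lastextent(P)`. -/
def OdotLive (R : RE α) (P : Set TreePath) (v : TreePath) : Prop :=
  R.IsCatNode v ∧ (v ++ [Dir.L]) ∈ R.lastExtentSet P

/-- `v` is weakly `⊙`-dominated by `u`: `u` is `⊙`-live, a proper ancestor of `v`,
and `first(v) ⊆ first(right(u))`. -/
def WeakOdotDom (R : RE α) (P : Set TreePath) (u v : TreePath) : Prop :=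
  R.OdotLive P u ∧ u <+: v ∧ u ≠ v ∧ R.firstSet v ⊆ R.firstSet (u ++ [Dir.R])

/-- The pair `(t, b)` delimits a segment of the transition tree of `P`: a path from a
leaf or branching node `b` up to the nearest branching node `t` strictly above it
(or to the root if there is none). -/
def IsSegment (R : RE α) (P : Set TreePath) (t b : TreePath) : Prop :=
  R.InT P b ∧ t <+: b ∧ t ≠ b ∧
  (R.LeafT P b ∨ R.Branching P b) ∧
  (R.Branching P t ∨ t = []) ∧
  (∀ w, t <+: w → w <+: b → w ≠ t → w ≠ b → ¬ R.Branching P w)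

/-- The language `L(R)`. -/
def lang : RE α → Set (List α)
  | .eps => {[]}
  | .ch a => {[a]}
  | .cat r s => {w | ∃ u ∈ lang r, ∃ v ∈ lang s, w = u ++ v}
  | .alt r s => lang r ∪ lang s
  | .star r => {w | ∃ l : List (List α), (∀ u ∈ l, u ∈ lang r) ∧ w = l.flatten}

/-- The position automaton (Glushkov automaton) of `R`: states are the positions of `R`
plus a start state `none`; for `q ∈ first(R)` there is a transition `(p₀, q, label(q))`,
and for `q ∈ follow(R,p)` a transition `(p, q, label(q))`; accepting states are
`last(R)`, together with `p₀` if `ε ∈ L(R)`. -/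
def posNFA (R : RE α) : NFA α (Option TreePath) where
  step := fun s a =>
    {t | ∃ q : TreePath, t = some q ∧ R.labelOf q = some a ∧
      ((s = none ∧ q ∈ R.firstSet []) ∨ (∃ p, s = some p ∧ q ∈ R.followSet p))}
  start := {none}
  accept := {t | (∃ p, t = some p ∧ p ∈ R.lastSet []) ∨ (t = none ∧ [] ∈ R.lang)}

end RE

/-!
First sets are nested along the parse tree. A sequence of positions of `R(w)` whose first
position lies below the child `w·d` starts with a sequence of `R(w·d)`, and any other
sequence of `R(w·d)` can be put in its place; so if `q ∈ first(w)` lies below `w·d`, then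
`q ∈ first(w·d) ⊆ first(w)`. Hence two nodes whose first sets share a position `q` are both
ancestors of `q`, so comparable, and the lower one has the smaller first set. A common target
`q` of two distinct relevant `⊙`-nodes (resp. `∗`-nodes, which are their own `parent*`) would
therefore make the upper one dominate the lower one.
-/

theorem List.prefix_of_append_singleton_prefix {β : Type*} {u v : List β} {x : β}
    (h : u ++ [x] <+: v ++ [x]) : u <+: v := by
  rcases List.prefix_concat_iff.1 h with h | h
  · rw [List.append_cancel_right h]
  · exact (List.prefix_append u [x]).trans h

namespace RE

variable {α : Type}

theorem sub_append {R r : RE α} {w : TreePath} (h : R.sub w = some r) (t : TreePath) :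
    R.sub (w ++ t) = r.sub t := by
  induction w generalizing R with
  | nil => simp only [sub, Option.some.injEq] at h; subst h; rfl
  | cons d w ih =>
    cases R <;> cases d <;> first | exact ih h | simp [sub] at h

theorem PosSeq.exists_child {r : RE α} {d : Dir} {p : TreePath} {ws : List TreePath}
    (h : PosSeq r ((d :: p) :: ws)) :
    ∃ r', r.sub [d] = some r' ∧ (∃ ws', PosSeq r' (p :: ws')) ∧
      ∀ p' ws', PosSeq r' (p' :: ws') → ∃ ws'', PosSeq r ((d :: p') :: ws'') := by
  generalize hl : (d :: p) :: ws = l at h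
  induction h generalizing ws with
  | eps | ch | starNil => simp at hl
  | @cat r s u v hu hv =>
    rcases u with _ | ⟨p₁, u⟩
    · rcases v with _ | ⟨p₁, v⟩
      · simp at hl
      simp only [List.map_nil, List.nil_append, List.map_cons, List.cons.injEq] at hl
      obtain ⟨⟨rfl, rfl⟩, -⟩ := hl
      exact ⟨s, by simp [sub], ⟨v, hv⟩, fun p' ws' h' =>
        ⟨_, by simpa using PosSeq.cat hu h'⟩⟩
    simp only [List.map_cons, List.cons_append, List.cons.injEq] at hl
    obtain ⟨⟨rfl, rfl⟩, -⟩ := hl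
    exact ⟨r, by simp [sub], ⟨u, hu⟩, fun p' ws' h' =>
      ⟨_, by simpa using PosSeq.cat h' hv⟩⟩
  | @altL r s u hu =>
    rcases u with _ | ⟨p₁, u⟩
    · simp at hl
    simp only [List.map_cons, List.cons.injEq] at hl
    obtain ⟨⟨rfl, rfl⟩, -⟩ := hl
    exact ⟨r, by simp [sub], ⟨u, hu⟩, fun p' ws' h' =>
      ⟨_, by simpa using PosSeq.altL (s := s) h'⟩⟩
  | @altR r s v hv =>
    rcases v with _ | ⟨p₁, v⟩
    · simp at hl
    simp only [List.map_cons, List.cons.injEq] at hl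
    obtain ⟨⟨rfl, rfl⟩, -⟩ := hl
    exact ⟨s, by simp [sub], ⟨v, hv⟩, fun p' ws' h' =>
      ⟨_, by simpa using PosSeq.altR (r := r) h'⟩⟩
  | @starCons r u w hu _ _ ihw =>
    rcases u with _ | ⟨p₁, u⟩
    · exact ihw (by simpa using hl)
    simp only [List.map_cons, List.cons_append, List.cons.injEq] at hl
    obtain ⟨⟨rfl, rfl⟩, -⟩ := hl
    exact ⟨r, by simp [sub], ⟨u, hu⟩, fun p' ws' h' =>
      ⟨_, by simpa using PosSeq.starCons h' (PosSeq.starNil (r := r))⟩⟩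

theorem prefix_of_mem_firstSet {R : RE α} {w q : TreePath} (h : q ∈ R.firstSet w) :
    w <+: q := by
  obtain ⟨-, -, p, -, -, rfl⟩ := h
  exact List.prefix_append w p

theorem firstSet_snoc {R : RE α} {w q : TreePath} {d : Dir} (hq : q ∈ R.firstSet w)
    (hd : w ++ [d] <+: q) :
    q ∈ R.firstSet (w ++ [d]) ∧ R.firstSet (w ++ [d]) ⊆ R.firstSet w := by
  obtain ⟨r, hr, p, ws, hseq, rfl⟩ := hq
  obtain ⟨p, rfl⟩ : ∃ p', p = d :: p' := by
    obtain ⟨t, ht⟩ := hd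
    simp only [List.append_assoc, List.singleton_append, List.append_cancel_left_eq] at ht
    exact ⟨t, ht.symm⟩
  obtain ⟨r', hr', ⟨ws', hseq'⟩, hlift⟩ := hseq.exists_child
  have hsub : R.sub (w ++ [d]) = some r' := (sub_append hr [d]).trans hr'
  refine ⟨⟨r', hsub, p, ws', hseq', by simp⟩, ?_⟩
  rintro _ ⟨r'', hr'', p', ws'', hseq'', rfl⟩
  obtain rfl : r'' = r' := Option.some_injective _ (hr''.symm.trans hsub)
  obtain ⟨ws₂, hseq₂⟩ := hlift p' ws'' hseq''
  exact ⟨r, hr, d :: p', ws₂, hseq₂, by simp⟩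

theorem firstSet_append {R : RE α} {w q : TreePath} (t : TreePath) (hq : q ∈ R.firstSet w)
    (ht : w ++ t <+: q) : q ∈ R.firstSet (w ++ t) ∧ R.firstSet (w ++ t) ⊆ R.firstSet w := by
  induction t generalizing w with
  | nil => simpa using hq
  | cons d t ih =>
    rw [← List.singleton_append, ← List.append_assoc] at ht ⊢
    have hd := firstSet_snoc hq ((List.prefix_append _ t).trans ht)
    obtain ⟨hq', hsub⟩ := ih hd.1 ht
    exact ⟨hq', hsub.trans hd.2⟩

theorem firstSet_nested {R : RE α} {w w' q : TreePath} (hq : q ∈ R.firstSet w)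
    (hq' : q ∈ R.firstSet w') :
    (w <+: w' ∧ R.firstSet w' ⊆ R.firstSet w) ∨
      (w' <+: w ∧ R.firstSet w ⊆ R.firstSet w') := by
  rcases List.prefix_or_prefix_of_prefix (prefix_of_mem_firstSet hq)
    (prefix_of_mem_firstSet hq') with h | h
  · obtain ⟨t, rfl⟩ := h
    exact .inl ⟨List.prefix_append w t, (firstSet_append t hq (prefix_of_mem_firstSet hq')).2⟩
  · obtain ⟨t, rfl⟩ := h
    exact .inr ⟨List.prefix_append w' t, (firstSet_append t hq' (prefix_of_mem_firstSet hq)).2⟩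

theorem IsLowestStarAnc.eq_of_isStarNode {R : RE α} {v u : TreePath}
    (h : R.IsLowestStarAnc v u) (hv : R.IsStarNode v) : u = v :=
  h.1.eq_of_length (le_antisymm h.1.length_le (h.2.2 v (List.prefix_refl v) hv).length_le)

theorem deltaStar_subset_firstSet {R : RE α} {v : TreePath} (hv : R.IsStarNode v) (a : α) :
    R.deltaStar v a ⊆ R.firstSet v := by
  rintro q ⟨-, u, hu, hq⟩
  rwa [← hu.eq_of_isStarNode hv]

variable {R : RE α} {P : Set TreePath} {a : α} {u v : TreePath}

theorem disjoint_deltaOdot_of_mem_relNOdot (hu : u ∈ R.RelNOdot P a) (hv : v ∈ R.RelNOdot P a)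
    (hne : u ≠ v) : Disjoint (R.deltaOdot u a) (R.deltaOdot v a) := by
  refine Set.disjoint_left.2 fun q hqu hqv => ?_
  rcases firstSet_nested hqu.2 hqv.2 with ⟨hpre, hsub⟩ | ⟨hpre, hsub⟩
  · exact hv.2 u hu.1 ⟨List.prefix_of_append_singleton_prefix hpre, hne, hsub⟩
  · exact hu.2 v hv.1 ⟨List.prefix_of_append_singleton_prefix hpre, hne.symm, hsub⟩

theorem disjoint_deltaStar_of_mem_relNStar (hu : u ∈ R.RelNStar P a) (hv : v ∈ R.RelNStar P a)
    (hne : u ≠ v) : Disjoint (R.deltaStar u a) (R.deltaStar v a) := by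
  refine Set.disjoint_left.2 fun q hqu hqv => ?_
  rcases firstSet_nested (deltaStar_subset_firstSet hu.1.1 a hqu)
    (deltaStar_subset_firstSet hv.1.1 a hqv) with ⟨hpre, hsub⟩ | ⟨hpre, hsub⟩
  · exact hv.2 u hu.1 ⟨hpre, hne, hsub⟩
  · exact hu.2 v hv.1 ⟨hpre, hne.symm, hsub⟩

end RE

theorem relevant_delta_disjoint_general {α : Type} (R : RE α) (P : Set TreePath) (a : α) :
    (∀ u ∈ R.RelNOdot P a, ∀ v ∈ R.RelNOdot P a, u ≠ v →
      Disjoint (R.deltaOdot u a) (R.deltaOdot v a)) ∧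
    (∀ u ∈ R.RelNStar P a, ∀ v ∈ R.RelNStar P a, u ≠ v →
      Disjoint (R.deltaStar u a) (R.deltaStar v a)) :=
  ⟨fun _ hu _ hv hne => RE.disjoint_deltaOdot_of_mem_relNOdot hu hv hne,
    fun _ hu _ hv hne => RE.disjoint_deltaStar_of_mem_relNStar hu hv hne⟩

/-- For any distinct pair of nodes `u, v ∈ Ñ⊙(P,α)`, the sets `δ⊙(u,α)` and `δ⊙(v,α)`
are disjoint; and for any distinct pair of nodes `u, v ∈ Ñ∗(P,α)`, the sets `δ∗(u,α)`
and `δ∗(v,α)` are disjoint. -/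
theorem relevant_delta_disjoint {α : Type} (R : RE α) (P : Set TreePath) (a : α)
    (hP : ∀ p ∈ P, R.IsPos p) :
    (∀ u ∈ R.RelNOdot P a, ∀ v ∈ R.RelNOdot P a, u ≠ v →
      Disjoint (R.deltaOdot u a) (R.deltaOdot v a)) ∧
    (∀ u ∈ R.RelNStar P a, ∀ v ∈ R.RelNStar P a, u ≠ v →
      Disjoint (R.deltaStar u a) (R.deltaStar v a)) :=
  relevant_delta_disjoint_general R P a
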